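/- arXiv:1905.07292 — 2 statements merged into one kernel-verified Lean document; each statement's English description precedes it below -/
import Mathlib

section
/- Let k ≥ 2 and let a, b_1,…,b_k, x, y_1,…,y_k be integers satisfying: (1) 3x + Σy_i ≥ 1, (2) b_i ≤ 0 for all i, (3) a + b_i + b_j ≥ 0 for all i ≠ j, (4) b_i + y_i ≥ 0 for all i, (5) a + x + b_i + b_j + y_i + y_j ≤ 0 for all i ≠ j. Then a ≥ 0, a + x ≤ 0, and (k/2)·x + Σ_{i=1}^k y_i ≤ 0 (as a rational inequality); in particular if 2 ≤ k ≤ 6 no such integers exist. -/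
theorem prop_II_2_Xk_ruled_out (k : ℕ) (hk : 2 ≤ k)
    (a x : ℤ) (b y : Fin k → ℤ)
    (h1 : 3 * x + ∑ i, y i ≥ 1)
    (h2 : ∀ i, b i ≤ 0)
    (h3 : ∀ i j : Fin k, i ≠ j → a + b i + b j ≥ 0)
    (h4 : ∀ i, b i + y i ≥ 0)
    (h5 : ∀ i j : Fin k, i ≠ j → a + x + b i + b j + y i + y j ≤ 0) :
    a ≥ 0 ∧ a + x ≤ 0 ∧
    ((k : ℚ) / 2 * (x : ℚ) + ∑ i, (y i : ℚ) ≤ 0) ∧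
    (k ≤ 6 → False) := by
  have hk0 : 0 < k := by omega
  have hk1' : 1 < k := by omega
  let i0 : Fin k := ⟨0, hk0⟩
  let i1 : Fin k := ⟨1, hk1'⟩
  have hne : i0 ≠ i1 := by
    simp [i0, i1, Fin.ne_iff_vne]
  have ha : a ≥ 0 := by
    have := h3 i0 i1 hne
    have := h2 i0
    have := h2 i1
    linarith
  have hax : a + x ≤ 0 := by
    have := h5 i0 i1 hne
    have := h4 i0
    have := h4 i1
    linarith
  set S : ℤ := ∑ i, y i with hS
  have key : ∀ i j : Fin k, i ≠ j → x + y i + y j ≤ 0 := by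
    intro i j hij
    have := h3 i j hij
    have := h5 i j hij
    linarith
  have hdouble : ∑ i : Fin k, ∑ j ∈ Finset.univ.erase i, (x + y i + y j) ≤ 0 :=
    Finset.sum_nonpos fun i _ =>
      Finset.sum_nonpos fun j hj => key i j (Finset.ne_of_mem_erase hj).symm
  have hcalc : ∀ i : Fin k,
      ∑ j ∈ Finset.univ.erase i, (x + y i + y j)
        = ((k : ℤ) - 1) * (x + y i) + (S - y i) := by
    intro i
    rw [Finset.sum_add_distrib, Finset.sum_const,
      Finset.sum_erase_eq_sub (Finset.mem_univ i),
      Finset.card_erase_of_mem (Finset.mem_univ i)]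
    simp only [Finset.card_univ, Fintype.card_fin, ← hS]
    have : ((k - 1 : ℕ) : ℤ) = (k : ℤ) - 1 := by
      have : 1 ≤ k := by omega
      push_cast [this]
      ring
    rw [nsmul_eq_mul, this]
  have hsum : (k : ℤ) * x + 2 * S ≤ 0 := by
    have heq : ∑ i : Fin k, ∑ j ∈ Finset.univ.erase i, (x + y i + y j)
        = ((k : ℤ) - 1) * ((k : ℤ) * x + 2 * S) := by
      rw [Finset.sum_congr rfl fun i _ => hcalc i]
      rw [Finset.sum_add_distrib, Finset.sum_sub_distrib, ← Finset.mul_sum,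
        Finset.sum_add_distrib, Finset.sum_const, Finset.sum_const,
        Finset.card_univ, Fintype.card_fin, ← hS]
      ring
    rw [heq] at hdouble
    have hk1 : (1 : ℤ) ≤ (k : ℤ) - 1 := by
      have : (2 : ℤ) ≤ (k : ℤ) := by exact_mod_cast hk
      linarith
    nlinarith
  refine ⟨ha, hax, ?_, ?_⟩
  · have hq : (k : ℚ) * (x : ℚ) + 2 * ∑ i, (y i : ℚ) ≤ 0 := by
      have : ((k : ℤ) * x + 2 * S : ℤ) ≤ 0 := hsum
      have := hS
      push_cast [hS] at this ⊢
      exact_mod_cast hsum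
    linarith
  · intro hk6
    have hx : x ≤ 0 := by linarith
    have hk6' : (k : ℤ) ≤ 6 := by exact_mod_cast hk6
    nlinarith [mul_nonneg (by linarith : (0:ℤ) ≤ 6 - (k:ℤ)) (by linarith : (0:ℤ) ≤ -x)]
end

section
/- Let a, b_1,…,b_7, x, y_1,…,y_7 be integers satisfying conditions (1)–(5) of the X_k case with k = 7, and additionally: 3a + 2b_1 + (b_2+⋯+b_7) ≥ 0 and 3a + 3x + 2b_1 + 2y_1 + (b_2+⋯+b_7) + (y_2+⋯+y_7) ≤ 0, where these hold for every permutation of the indices {1,…,7} (in particular with the index achieving the maximum of the y_i in place of 1). Then no such integers exist. -/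
theorem prop_II_2_X7_ruled_out
    (a x : ℤ) (b y : Fin 7 → ℤ)
    (h1 : 3 * x + ∑ i, y i ≥ 1)
    (h2 : ∀ i, b i ≤ 0)
    (h3 : ∀ i j : Fin 7, i ≠ j → a + b i + b j ≥ 0)
    (h4 : ∀ i, b i + y i ≥ 0)
    (h5 : ∀ i j : Fin 7, i ≠ j → a + x + b i + b j + y i + y j ≤ 0)
    (h6 : ∀ j : Fin 7, 3 * a + 2 * b j + (∑ i, b i - b j) ≥ 0)
    (h7 : ∀ j : Fin 7, 3 * a + 3 * x + 2 * b j + 2 * y j +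
      (∑ i, b i - b j) + (∑ i, y i - y j) ≤ 0) :
    False := by
  have := h6 0
  have := h7 0
  have := h4 0
  have := h2 0
  linarith
end
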